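/- Let H ∈ (0,1/2), γ ∈ (0,1), T ∈ (0,∞), and define for 0 ≤ s ≤ t ≤ T the function V_Z(s,t) = ((1−γ) t^{2H} + (γ²−γ) s^{2H} + γ (t−s)^{2H})^{1/2}. Then, as (s,t) → (0,T) within {0 ≤ s ≤ t ≤ T}, V_Z(s,t) = T^H ( 1 − H T^{−1} (T−t) − ((γ−γ²)/2) T^{−2H} s^{2H} ) + o( (T−t) + s^{2H} ); that is, [V_Z(s,t) − T^H(1 − H T^{−1}(T−t) − ((γ−γ²)/2) T^{−2H} s^{2H})] / ((T−t) + s^{2H}) → 0 as (s,t) → (0,T) with (s,t) ≠ (0,T). -/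

import Mathlib

/-- The standard deviation function `V_Z(s,t)` of the Gaussian field
`Z(s,t) = X_H(t) − γ X_H(s)`. -/
noncomputable def VZ (H γ s t : ℝ) : ℝ :=
  ((1 - γ) * t ^ (2*H) + (γ^2 - γ) * s ^ (2*H) + γ * (t - s) ^ (2*H)) ^ ((1:ℝ)/2)

/-!
The radicand `V_Z(s,t)²` expands to first order as
`T^{2H} + 2H T^{2H-1} (t − T) − (γ − γ²) s^{2H} + o((T − t) + s^{2H})`:
`t ↦ t^{2H}` is differentiable at `T`, and `(t − s)^{2H} − t^{2H} = O(s) = o(s^{2H})` because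
`x ↦ x^{2H}` is strictly differentiable at `T` and `2H < 1`. Composing this expansion with the
derivative of `x ↦ x^{1/2}` at `T^{2H}` gives the expansion of `V_Z`.
-/

open Filter Asymptotics Topology

theorem HasStrictFDerivAt.isBigO_comp_sub {𝕜 E F : Type*} [NontriviallyNormedField 𝕜]
    [NormedAddCommGroup E] [NormedSpace 𝕜 E] [NormedAddCommGroup F] [NormedSpace 𝕜 F]
    {f : E → F} {f' : E →L[𝕜] F} {x : E}
    (hf : HasStrictFDerivAt f f' x) {α : Type*} {l : Filter α} {a b : α → E}
    (ha : Tendsto a l (𝓝 x)) (hb : Tendsto b l (𝓝 x)) :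
    (fun y => f (a y) - f (b y)) =O[l] fun y => a y - b y :=
  hf.isBigO_sub.comp_tendsto (ha.prodMk_nhds hb)

theorem isLittleO_id_rpow_nhdsGE_zero {p : ℝ} (hp : p < 1) :
    (fun x : ℝ => x) =o[𝓝[≥] 0] fun x => x ^ p := by
  have hq : Tendsto (fun x : ℝ => x ^ (1 - p)) (𝓝[≥] 0) (𝓝 0) := by
    have := (Real.continuousAt_rpow_const 0 (1 - p) (Or.inr (by linarith))).tendsto
    rw [Real.zero_rpow (by linarith)] at this
    exact this.mono_left nhdsWithin_le_nhds
  refine ((isLittleO_one_iff ℝ).mpr hq |>.mul_isBigO (isBigO_refl (fun x : ℝ => x ^ p) _)).congr'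
    ?_ (by simp)
  filter_upwards [self_mem_nhdsWithin] with x (hx : 0 ≤ x)
  rw [← Real.rpow_add' hx (by simp), sub_add_cancel, Real.rpow_one]

theorem HasDerivAt.isLittleO_comp_sub {𝕜 F : Type*} [NontriviallyNormedField 𝕜]
    [NormedAddCommGroup F] [NormedSpace 𝕜 F] {g : 𝕜 → F} {g' : F} {a : 𝕜}
    (hg : HasDerivAt g g' a) {α G : Type*} [NormedAddCommGroup G] {l : Filter α}
    {u v : α → 𝕜} {w : α → G} (huv : (fun x => u x - a - v x) =o[l] w) (hv : v =O[l] w)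
    (hw : Tendsto w l (𝓝 0)) :
    (fun x => g (u x) - g a - v x • g') =o[l] w := by
  have hua : (fun x => u x - a) =O[l] w := (huv.isBigO.add hv).congr_left (by simp)
  have hu : Tendsto u l (𝓝 a) := by
    simpa using (hua.trans_tendsto hw).add_const a
  have h1 := (hg.isLittleO.comp_tendsto hu).trans_isBigO hua
  have h2 : (fun x => (u x - a - v x) • g') =o[l] w :=
    ((ContinuousLinearMap.toSpanSingleton 𝕜 g').isBigO_comp _ l).trans_isLittleO huv
  exact (h1.add h2).congr_left fun x => by simp only [Function.comp_apply, sub_smul]; abel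

theorem isBigO_add_of_nonneg_right {α : Type*} {l : Filter α} {f g : α → ℝ}
    (hf : ∀ᶠ x in l, 0 ≤ f x) (hg : ∀ᶠ x in l, 0 ≤ g x) : f =O[l] fun x => f x + g x :=
  IsBigO.of_bound' <| by
    filter_upwards [hf, hg] with x hfx hgx
    rw [Real.norm_of_nonneg hfx, Real.norm_of_nonneg (add_nonneg hfx hgx)]
    linarith

theorem isBigO_add_of_nonneg_left {α : Type*} {l : Filter α} {f g : α → ℝ}
    (hf : ∀ᶠ x in l, 0 ≤ f x) (hg : ∀ᶠ x in l, 0 ≤ g x) : g =O[l] fun x => f x + g x :=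
  (isBigO_add_of_nonneg_right hg hf).congr_right fun _ => add_comm _ _

noncomputable def varZ (H γ s t : ℝ) : ℝ :=
  (1 - γ) * t ^ (2*H) + (γ^2 - γ) * s ^ (2*H) + γ * (t - s) ^ (2*H)

section Corner

variable (T : ℝ)

theorem isBigO_sub_snd_nhdsGE_prod_nhdsLE (r : ℝ) :
    (fun p : ℝ × ℝ => T - p.2) =O[𝓝[≥] (0:ℝ) ×ˢ 𝓝[≤] T] fun p => (T - p.2) + p.1 ^ r :=
  isBigO_add_of_nonneg_right
    ((eventually_mem_nhdsWithin.mono fun (t : ℝ) (h : t ≤ T) => sub_nonneg.mpr h).prod_inr _)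
    ((eventually_mem_nhdsWithin.mono fun (s : ℝ) (h : 0 ≤ s) => Real.rpow_nonneg h r).prod_inl _)

theorem isBigO_fst_rpow_nhdsGE_prod_nhdsLE (r : ℝ) :
    (fun p : ℝ × ℝ => p.1 ^ r) =O[𝓝[≥] (0:ℝ) ×ˢ 𝓝[≤] T] fun p => (T - p.2) + p.1 ^ r :=
  isBigO_add_of_nonneg_left
    ((eventually_mem_nhdsWithin.mono fun (t : ℝ) (h : t ≤ T) => sub_nonneg.mpr h).prod_inr _)
    ((eventually_mem_nhdsWithin.mono fun (s : ℝ) (h : 0 ≤ s) => Real.rpow_nonneg h r).prod_inl _)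

end Corner

theorem varZ_sub_isLittleO {H T : ℝ} (γ : ℝ) (hH : H < 1/2) (hT : 0 < T) :
    (fun p : ℝ × ℝ => varZ H γ p.1 p.2 - T ^ (2*H)
        - (2*H * T ^ (2*H - 1) * (p.2 - T) + (γ^2 - γ) * p.1 ^ (2*H)))
      =o[𝓝[≥] (0:ℝ) ×ˢ 𝓝[≤] T] fun p => (T - p.2) + p.1 ^ (2*H) := by
  have hs : Tendsto Prod.fst (𝓝[≥] (0:ℝ) ×ˢ 𝓝[≤] T) (𝓝[≥] 0) := tendsto_fst
  have ht : Tendsto Prod.snd (𝓝[≥] (0:ℝ) ×ˢ 𝓝[≤] T) (𝓝 T) :=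
    tendsto_snd.mono_right nhdsWithin_le_nhds
  have hsnd : (fun p : ℝ × ℝ => p.2 ^ (2*H) - T ^ (2*H) - (p.2 - T) * (2*H * T ^ (2*H - 1)))
      =o[𝓝[≥] (0:ℝ) ×ˢ 𝓝[≤] T] fun p => (T - p.2) + p.1 ^ (2*H) :=
    ((Real.hasDerivAt_rpow_const (Or.inl hT.ne')).isLittleO.comp_tendsto ht).trans_isBigO
      ((isBigO_sub_snd_nhdsGE_prod_nhdsLE T _).neg_left.congr_left fun _ => neg_sub _ _)
  have hdiff : (fun p : ℝ × ℝ => (p.2 - p.1) ^ (2*H) - p.2 ^ (2*H))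
      =o[𝓝[≥] (0:ℝ) ×ˢ 𝓝[≤] T] fun p => (T - p.2) + p.1 ^ (2*H) := by
    have hlip := (Real.hasStrictDerivAt_rpow_const_of_ne hT.ne' (2*H)).hasStrictFDerivAt
      |>.isBigO_comp_sub (by simpa using ht.sub (tendsto_nhds_of_tendsto_nhdsWithin hs)) ht
    refine ((hlip.congr_right fun p => ?_).of_neg_right.trans_isLittleO
      ((isLittleO_id_rpow_nhdsGE_zero (by linarith)).comp_tendsto hs)).trans_isBigO
      (isBigO_fst_rpow_nhdsGE_prod_nhdsLE T _)
    simp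
  refine (hsnd.add (hdiff.const_mul_left γ)).congr_left fun p => ?_
  simp only [varZ]
  ring

theorem VZ_sub_isLittleO {H T : ℝ} (γ : ℝ) (hH : 0 < H) (hH' : H < 1/2) (hT : 0 < T) :
    (fun p : ℝ × ℝ => VZ H γ p.1 p.2
        - T ^ H * (1 - H * T⁻¹ * (T - p.2) - ((γ - γ^2)/2) * T ^ (-(2*H)) * p.1 ^ (2*H)))
      =o[𝓝[≥] (0:ℝ) ×ˢ 𝓝[≤] T] fun p => (T - p.2) + p.1 ^ (2*H) := by
  have hw : Tendsto (fun p : ℝ × ℝ => (T - p.2) + p.1 ^ (2*H))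
      (𝓝[≥] (0:ℝ) ×ˢ 𝓝[≤] T) (𝓝 0) := by
    have hs : Tendsto Prod.fst (𝓝[≥] (0:ℝ) ×ˢ 𝓝[≤] T) (𝓝 0) :=
      tendsto_fst.mono_right nhdsWithin_le_nhds
    have ht : Tendsto Prod.snd (𝓝[≥] (0:ℝ) ×ˢ 𝓝[≤] T) (𝓝 T) :=
      tendsto_snd.mono_right nhdsWithin_le_nhds
    have := (ht.const_sub T).add
      ((Real.continuousAt_rpow_const 0 (2*H) (Or.inr (by linarith))).tendsto.comp hs)
    simpa [Real.zero_rpow (by linarith : 2*H ≠ 0)] using this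
  have hD : (fun p : ℝ × ℝ => 2*H * T ^ (2*H - 1) * (p.2 - T) + (γ^2 - γ) * p.1 ^ (2*H))
      =O[𝓝[≥] (0:ℝ) ×ˢ 𝓝[≤] T] fun p => (T - p.2) + p.1 ^ (2*H) :=
    (((isBigO_sub_snd_nhdsGE_prod_nhdsLE T _).neg_left.congr_left fun _ => neg_sub _ _)
      |>.const_mul_left _).add ((isBigO_fst_rpow_nhdsGE_prod_nhdsLE T _).const_mul_left _)
  have hsqrt : HasDerivAt (fun x : ℝ => x ^ ((1:ℝ)/2)) (1/2 * (T ^ (2*H)) ^ ((1:ℝ)/2 - 1))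
      (T ^ (2*H)) :=
    Real.hasDerivAt_rpow_const (Or.inl (Real.rpow_pos_of_pos hT _).ne')
  refine (hsqrt.isLittleO_comp_sub (varZ_sub_isLittleO γ hH' hT) hD hw).congr_left fun p => ?_
  have h2H : T ^ (2*H) = T ^ H * T ^ H := by rw [← Real.rpow_add hT]; ring_nf
  have hhalf : (T ^ (2*H)) ^ ((1:ℝ)/2) = T ^ H := by rw [← Real.rpow_mul hT.le]; ring_nf
  have hhalf' : (T ^ (2*H)) ^ ((1:ℝ)/2 - 1) = (T ^ H)⁻¹ := by
    rw [← Real.rpow_mul hT.le, ← Real.rpow_neg hT.le]; ring_nf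
  rw [hhalf, hhalf', Real.rpow_sub_one hT.ne', Real.rpow_neg hT.le, h2H, smul_eq_mul]
  simp only [VZ, varZ]
  field_simp
  ring

theorem VZ_expansion_small_H_general (H γ T : ℝ)
    (hH : H ∈ Set.Ioo (0:ℝ) (1/2)) (hT : 0 < T) :
    Filter.Tendsto (fun p : ℝ × ℝ =>
      (VZ H γ p.1 p.2
        - T ^ H * (1 - H * T⁻¹ * (T - p.2) - ((γ - γ^2)/2) * T ^ (-(2*H)) * p.1 ^ (2*H)))
        / ((T - p.2) + p.1 ^ (2*H)))
      (nhdsWithin ((0:ℝ), T)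
        ({p : ℝ × ℝ | 0 ≤ p.1 ∧ p.1 ≤ p.2 ∧ p.2 ≤ T} \ {((0:ℝ), T)}))
      (nhds 0) :=
  (VZ_sub_isLittleO γ hH.1 hH.2 hT).tendsto_div_nhds_zero.mono_left
    ((nhdsWithin_mono _ fun _ hp => Set.mk_mem_prod hp.1.1 hp.1.2.2).trans_eq
      (nhdsWithin_prod_eq _ _ _ _))

/-- Expansion (3.8), case `H < 1/2`: as `(s,t) → (0,T)` within `{0 ≤ s ≤ t ≤ T}`,
`V_Z(s,t) = T^H (1 − H T⁻¹ (T−t) − ((γ−γ²)/2) T^{−2H} s^{2H}) + o((T−t) + s^{2H})`. -/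
theorem VZ_expansion_small_H (H γ T : ℝ)
    (hH : H ∈ Set.Ioo (0:ℝ) (1/2)) (hγ : γ ∈ Set.Ioo (0:ℝ) 1) (hT : 0 < T) :
    Filter.Tendsto (fun p : ℝ × ℝ =>
      (VZ H γ p.1 p.2
        - T ^ H * (1 - H * T⁻¹ * (T - p.2) - ((γ - γ^2)/2) * T ^ (-(2*H)) * p.1 ^ (2*H)))
        / ((T - p.2) + p.1 ^ (2*H)))
      (nhdsWithin ((0:ℝ), T)
        ({p : ℝ × ℝ | 0 ≤ p.1 ∧ p.1 ≤ p.2 ∧ p.2 ≤ T} \ {((0:ℝ), T)}))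
      (nhds 0) :=
  VZ_expansion_small_H_general H γ T hH hT
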